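/- Let C be a cycle on n₂ ≥ 3 vertices and let C† be obtained by the leaf-connecting operation: attach 2 new leaves to each vertex of C and then pair up all new leaves with edges. Then C† is an irregular graph with zero assortativity coefficient, i.e. 4|E†| · Σ_{ij ∈ E†} d_i d_j = (Σ_{ij ∈ E†}(d_i + d_j))², and |V†| = 3n₂. -/

import Mathlib

open Finset

attribute [local instance] Classical.propDecidable

namespace Neutral

/-- Number of edges of `G`. -/
noncomputable def m {V : Type*} [Fintype V] (G : SimpleGraph V) : ℕ :=
  G.edgeFinset.card

/-- `∑_{uv ∈ E} d_u · d_v`, each edge counted once. -/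
noncomputable def dd {V : Type*} [Fintype V] (G : SimpleGraph V) : ℕ :=
  ∑ e ∈ G.edgeFinset,
    Sym2.lift ⟨fun u v => G.degree u * G.degree v, fun _ _ => Nat.mul_comm _ _⟩ e

/-- `∑_{uv ∈ E} (d_u + d_v)`, each edge counted once. -/
noncomputable def ds {V : Type*} [Fintype V] (G : SimpleGraph V) : ℕ :=
  ∑ e ∈ G.edgeFinset,
    Sym2.lift ⟨fun u v => G.degree u + G.degree v, fun _ _ => Nat.add_comm _ _⟩ e

/-- `∑_{uv ∈ E} (d_u² + d_v²)`, each edge counted once. -/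
noncomputable def dsq {V : Type*} [Fintype V] (G : SimpleGraph V) : ℕ :=
  ∑ e ∈ G.edgeFinset,
    Sym2.lift ⟨fun u v => G.degree u ^ 2 + G.degree v ^ 2, fun _ _ => Nat.add_comm _ _⟩ e

/-- A graph is irregular if it is not regular of any degree. -/
def Irregular {V : Type*} [Fintype V] (G : SimpleGraph V) : Prop :=
  ¬ ∃ k, G.IsRegularOfDegree k

end Neutral

open Neutral

namespace Neutral

/-- The index type of the new leaves in the leaf-connecting operation:
`d_v` new leaves are attached to every vertex `v`. -/
noncomputable def Leaves {V : Type*} [Fintype V] (G : SimpleGraph V) : Type _ :=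
  Σ v : V, Fin (G.degree v)

noncomputable instance {V : Type*} [Fintype V] (G : SimpleGraph V) : Fintype (Leaves G) := by
  unfold Leaves; infer_instance

/-- One-directional adjacency for the leaf-connecting operation: the old edges of `G`
are kept, each new leaf is attached to its base vertex, and the new leaves are paired
up by the matching `σ`. -/
def lcS {V : Type*} [Fintype V] (G : SimpleGraph V) (σ : Leaves G → Leaves G) :
    (V ⊕ Leaves G) → (V ⊕ Leaves G) → Prop
  | Sum.inl u, Sum.inl v => G.Adj u v
  | Sum.inl u, Sum.inr l => l.1 = u
  | Sum.inr a, Sum.inr b => σ a = b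
  | _, _ => False

/-- The graph `G†` produced by the leaf-connecting operation with matching `σ`. -/
noncomputable def LeafConn {V : Type*} [Fintype V] (G : SimpleGraph V)
    (σ : Leaves G → Leaves G) : SimpleGraph (V ⊕ Leaves G) where
  Adj x y := x ≠ y ∧ (lcS G σ x y ∨ lcS G σ y x)
  symm := ⟨fun _ _ h => ⟨Ne.symm h.1, h.2.symm⟩⟩
  loopless := ⟨fun _ h => h.1 rfl⟩

end Neutral

/-!
In `C†` the cycle vertices have degree `4`, the new vertices degree `2`, and the degrees of the
neighbours of a vertex sum to `12` resp. `6`. Counting each edge through its two darts turns the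
edge sums into vertex sums, `2|E| = ∑ d_v`, `2 ∑ d_u d_v = ∑ d_v s_v` and
`2 ∑ (d_u + d_v) = ∑ (d_v² + s_v)` with `s_v` the neighbour degree sum, so that
`|E†| = 4n₂`, `∑ d_u d_v = 36 n₂`, `∑ (d_u + d_v) = 24 n₂`, and `4 · 4n₂ · 36n₂ = (24n₂)²`.
-/

namespace Neutral

section EdgeSums

variable {V : Type*} [Fintype V] (G : SimpleGraph V)

theorem sum_darts_eq_sum_neighborFinset {M : Type*} [AddCommMonoid M] (g : V → V → M) :
    ∑ d : G.Dart, g d.fst d.snd = ∑ v, ∑ u ∈ G.neighborFinset v, g v u := by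
  let e : G.Dart ≃ Σ v, G.neighborSet v :=
    { toFun := fun d => ⟨d.fst, d.snd, d.adj⟩
      invFun := fun p => ⟨(p.1, p.2), p.2.2⟩
      left_inv := fun _ => rfl
      right_inv := fun _ => rfl }
  refine (Fintype.sum_equiv e _ (fun p => g p.1 p.2) fun _ => rfl).trans ?_
  rw [Fintype.sum_sigma]
  exact Finset.sum_congr rfl fun v _ => Finset.sum_set_coe (s := G.neighborSet v) (f := g v)

theorem sum_darts_edge_eq_two_nsmul {M : Type*} [AddCommMonoid M] (f : Sym2 V → M) :
    ∑ d : G.Dart, f d.edge = 2 • ∑ e ∈ G.edgeFinset, f e := by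
  rw [← Finset.sum_fiberwise_of_maps_to (g := SimpleGraph.Dart.edge) (t := G.edgeFinset)
    (fun d _ => by simp), Finset.smul_sum]
  refine Finset.sum_congr rfl fun e he => ?_
  rw [Finset.sum_congr rfl fun d hd => congrArg f (Finset.mem_filter.1 hd).2, Finset.sum_const,
    G.dart_edge_fiber_card e (G.mem_edgeFinset.1 he)]

theorem two_nsmul_sum_edgeFinset {M : Type*} [AddCommMonoid M] (f : Sym2 V → M) :
    2 • ∑ e ∈ G.edgeFinset, f e = ∑ v, ∑ u ∈ G.neighborFinset v, f s(v, u) := by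
  rw [← sum_darts_edge_eq_two_nsmul, ← sum_darts_eq_sum_neighborFinset]
  rfl

noncomputable def neighborDegreeSum (v : V) : ℕ :=
  ∑ u ∈ G.neighborFinset v, G.degree u

theorem two_mul_m : 2 * m G = ∑ v, G.degree v :=
  (G.sum_degrees_eq_twice_card_edges).symm

theorem two_mul_dd : 2 * dd G = ∑ v, G.degree v * neighborDegreeSum G v := by
  rw [dd, ← smul_eq_mul, two_nsmul_sum_edgeFinset]
  simp only [Sym2.lift_mk, neighborDegreeSum, Finset.mul_sum]

theorem two_mul_ds : 2 * ds G = ∑ v, (G.degree v * G.degree v + neighborDegreeSum G v) := by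
  rw [ds, ← smul_eq_mul, two_nsmul_sum_edgeFinset]
  simp only [Sym2.lift_mk, neighborDegreeSum, Finset.sum_add_distrib, Finset.sum_const,
    G.card_neighborFinset_eq_degree, smul_eq_mul]

theorem neighborDegreeSum_of_isRegularOfDegree {k : ℕ} (h : G.IsRegularOfDegree k) (v : V) :
    neighborDegreeSum G v = k * k := by
  rw [neighborDegreeSum, Finset.sum_congr rfl fun u _ => h.degree_eq u, Finset.sum_const,
    G.card_neighborFinset_eq_degree, h.degree_eq, smul_eq_mul]

theorem irregular_of_degree_ne {u v : V} (h : G.degree u ≠ G.degree v) : Irregular G :=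
  fun ⟨_, hk⟩ => h ((hk u).trans (hk v).symm)

end EdgeSums

section LeafConnecting

variable {V : Type*} [Fintype V] (C : SimpleGraph V) (σ : Leaves C → Leaves C)

theorem card_leaves : Fintype.card (Leaves C) = ∑ v, C.degree v := by
  simp only [Leaves, Fintype.card_sigma, Fintype.card_fin]

noncomputable def leavesAt (v : V) : Finset (Leaves C) := {a | a.1 = v}

theorem mem_leavesAt {v : V} {a : Leaves C} : a ∈ leavesAt C v ↔ a.1 = v := by
  simp [leavesAt]

theorem card_leavesAt (v : V) : (leavesAt C v).card = C.degree v := by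
  rw [leavesAt, ← Fintype.card_subtype]
  exact (Fintype.card_congr (Equiv.sigmaSubtype (β := fun w => Fin (C.degree w)) v)).trans
    (Fintype.card_fin _)

theorem leafConn_adj_inl_inl (u v : V) :
    (LeafConn C σ).Adj (Sum.inl u) (Sum.inl v) ↔ C.Adj u v :=
  ⟨fun ⟨_, h⟩ => h.elim id C.adj_symm, fun h => ⟨by simpa using C.ne_of_adj h, Or.inl h⟩⟩

theorem leafConn_adj_inl_inr (u : V) (a : Leaves C) :
    (LeafConn C σ).Adj (Sum.inl u) (Sum.inr a) ↔ a.1 = u :=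
  ⟨fun ⟨_, h⟩ => h.elim id False.elim, fun h => ⟨Sum.inl_ne_inr, Or.inl h⟩⟩

theorem leafConn_neighborFinset_inl (v : V) :
    (LeafConn C σ).neighborFinset (Sum.inl v) =
      (C.neighborFinset v).disjSum (leavesAt C v) := by
  ext (u | a)
  · simp only [SimpleGraph.mem_neighborFinset, leafConn_adj_inl_inl, Finset.inl_mem_disjSum]
  · simp only [SimpleGraph.mem_neighborFinset, leafConn_adj_inl_inr, Finset.inr_mem_disjSum,
      mem_leavesAt]

theorem leafConn_degree_inl (v : V) : (LeafConn C σ).degree (Sum.inl v) = 2 * C.degree v := by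
  rw [← SimpleGraph.card_neighborFinset_eq_degree, leafConn_neighborFinset_inl,
    Finset.card_disjSum, card_leavesAt, C.card_neighborFinset_eq_degree, two_mul]

variable {σ}

theorem leafConn_adj_inr_inr (hinv : Function.Involutive σ) (hnf : ∀ a, σ a ≠ a)
    (a b : Leaves C) :
    (LeafConn C σ).Adj (Sum.inr a) (Sum.inr b) ↔ b = σ a := by
  refine ⟨fun ⟨_, h⟩ => h.elim Eq.symm fun h => h ▸ (hinv b).symm, ?_⟩
  rintro rfl
  exact ⟨by simpa using (hnf a).symm, Or.inl rfl⟩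

theorem leafConn_neighborFinset_inr (hinv : Function.Involutive σ) (hnf : ∀ a, σ a ≠ a)
    (a : Leaves C) :
    (LeafConn C σ).neighborFinset (Sum.inr a) = {Sum.inl a.1, Sum.inr (σ a)} := by
  ext (u | b)
  · simp [SimpleGraph.adj_comm, leafConn_adj_inl_inr, eq_comm]
  · simp [leafConn_adj_inr_inr C hinv hnf]

theorem leafConn_degree_inr (hinv : Function.Involutive σ) (hnf : ∀ a, σ a ≠ a)
    (a : Leaves C) : (LeafConn C σ).degree (Sum.inr a) = 2 := by
  rw [← SimpleGraph.card_neighborFinset_eq_degree, leafConn_neighborFinset_inr C hinv hnf,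
    Finset.card_pair Sum.inl_ne_inr]

theorem leafConn_neighborDegreeSum_inr (hinv : Function.Involutive σ) (hnf : ∀ a, σ a ≠ a)
    (a : Leaves C) :
    neighborDegreeSum (LeafConn C σ) (Sum.inr a) = 2 * C.degree a.1 + 2 := by
  rw [neighborDegreeSum, leafConn_neighborFinset_inr C hinv hnf, Finset.sum_pair Sum.inl_ne_inr,
    leafConn_degree_inl, leafConn_degree_inr C hinv hnf]

theorem leafConn_neighborDegreeSum_inl (hinv : Function.Involutive σ) (hnf : ∀ a, σ a ≠ a)
    (v : V) :
    neighborDegreeSum (LeafConn C σ) (Sum.inl v) =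
      2 * neighborDegreeSum C v + 2 * C.degree v := by
  simp only [neighborDegreeSum, leafConn_neighborFinset_inl, Finset.sum_disjSum,
    leafConn_degree_inl, leafConn_degree_inr C hinv hnf, Finset.sum_const, card_leavesAt,
    smul_eq_mul, Finset.mul_sum, mul_comm]

end LeafConnecting

end Neutral

theorem stmt_9 {V : Type*} [Fintype V] (C : SimpleGraph V) (n₂ : ℕ)
    (hcard : Fintype.card V = n₂) (hn : 3 ≤ n₂)
    (hreg : C.IsRegularOfDegree 2)
    (σ : Leaves C → Leaves C) (hinv : Function.Involutive σ) (hnf : ∀ a, σ a ≠ a) :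
    Irregular (LeafConn C σ) ∧
      4 * m (LeafConn C σ) * dd (LeafConn C σ) = (ds (LeafConn C σ)) ^ 2 ∧
      Fintype.card (V ⊕ Leaves C) = 3 * n₂ := by
  have hleaves : Fintype.card (Leaves C) = 2 * n₂ := by
    simp [card_leaves, hreg.degree_eq, hcard, mul_comm]
  have deg_inl (v : V) : (LeafConn C σ).degree (Sum.inl v) = 4 := by
    rw [leafConn_degree_inl, hreg.degree_eq]
  have deg_inr := leafConn_degree_inr C hinv hnf
  have nds_inl (v : V) : neighborDegreeSum (LeafConn C σ) (Sum.inl v) = 12 := by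
    rw [leafConn_neighborDegreeSum_inl C hinv hnf, neighborDegreeSum_of_isRegularOfDegree C hreg,
      hreg.degree_eq]
  have nds_inr (a : Leaves C) : neighborDegreeSum (LeafConn C σ) (Sum.inr a) = 6 := by
    rw [leafConn_neighborDegreeSum_inr C hinv hnf, hreg.degree_eq]
  obtain ⟨twice_m, twice_dd, twice_ds⟩ : 2 * m (LeafConn C σ) = 8 * n₂ ∧
      2 * dd (LeafConn C σ) = 72 * n₂ ∧ 2 * ds (LeafConn C σ) = 48 * n₂ := by
    simp only [two_mul_m, two_mul_dd, two_mul_ds, Fintype.sum_sum_type, deg_inl, deg_inr, nds_inl,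
      nds_inr, Finset.sum_const, Finset.card_univ, hcard, hleaves, smul_eq_mul]
    omega
  obtain ⟨a⟩ : Nonempty (Leaves C) := Fintype.card_pos_iff.1 (by omega)
  refine ⟨irregular_of_degree_ne _ (u := Sum.inl a.1) (v := Sum.inr a) ?_, ?_, ?_⟩
  · rw [deg_inl, deg_inr]
    decide
  · obtain ⟨hm, hdd, hds⟩ : m (LeafConn C σ) = 4 * n₂ ∧ dd (LeafConn C σ) = 36 * n₂ ∧
        ds (LeafConn C σ) = 24 * n₂ := by omega
    rw [hm, hdd, hds]
    ring
  · rw [Fintype.card_sum, hcard, hleaves]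
    ring
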